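/- arXiv:2211.15991 — 4 statements merged into one kernel-verified Lean document; each statement's English description precedes it below -/
import Mathlib

section
/- Let 0 ≤ m < s < M, α > 0, x_0 ∈ [0,π], and let f ∈ 𝔉(m,M,s). Set l = π(s−m)/(M−m). Then u_f(x_0) ≤ η_α(x_0)·m + (M−m)·ν_α(x_0,l). -/
open MeasureTheory Real Set Filter

noncomputable def cA (α : ℝ) : ℝ := α / (1 + α * π)

noncomputable def robinG (α x y : ℝ) : ℝ :=
  -(1/2) * cA α * x * y - (1/2) * |x - y| + 1 / (2 * cA α)

/-- Solution of the Robin problem with heat source `f`. -/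
noncomputable def robinSol (α : ℝ) (f : ℝ → ℝ) (x : ℝ) : ℝ :=
  ∫ y in (-π)..π, robinG α x y * f y

/-- The class 𝔉(m,M,s) of heat sources. -/
def memF (m M s : ℝ) (f : ℝ → ℝ) : Prop :=
  MeasureTheory.IntegrableOn f (Set.Icc (-π) π) MeasureTheory.volume ∧
  (∀ᵐ x ∂(MeasureTheory.volume.restrict (Set.Icc (-π) π)), m ≤ f x ∧ f x ≤ M) ∧
  (∫ x in (-π)..π, f x) = 2 * π * s

/-- Temperature gap (oscillation) over `[-π, π]`. -/
noncomputable def osc (u : ℝ → ℝ) : ℝ :=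
  sSup (u '' Set.Icc (-π) π) - sInf (u '' Set.Icc (-π) π)

noncomputable def eta (α x : ℝ) : ℝ := -x^2/2 + π/α + π^2/2

noncomputable def nu (α x l : ℝ) : ℝ :=
  if x * (1 - l * cA α) < π - l then
    (l / cA α) * (1 - l * cA α / 2) * (1 - x^2 * (cA α)^2)
  else
    (1/2) * (π - x)^2 + l * (1 - cA α * x) * (2 * π - l + 1/α)

lemma cA_pos {α : ℝ} (hα : 0 < α) : 0 < cA α := by
  have hπ : 0 < π := pi_pos
  have : 0 < 1 + α * π := by positivity
  exact div_pos hα this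

lemma cA_pi_lt_one {α : ℝ} (hα : 0 < α) : cA α * π < 1 := by
  have hπ : 0 < π := pi_pos
  have h : 0 < 1 + α * π := by positivity
  rw [cA, div_mul_eq_mul_div, div_lt_one h]
  linarith

lemma inv_cA {α : ℝ} (hα : 0 < α) : 1 / cA α = 1/α + π := by
  have hπ : 0 < π := pi_pos
  have h : (0:ℝ) < 1 + α * π := by positivity
  rw [cA]
  field_simp

lemma affine_integral (q r A B : ℝ) :
    ∫ y in A..B, (q * y + r) = q * (B^2 - A^2)/2 + r * (B - A) := by
  have h1 : ∫ y in A..B, (q * y + r) =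
      (∫ y in A..B, q * y) + ∫ y in A..B, (r : ℝ) := by
    apply intervalIntegral.integral_add
    · exact (continuous_const.mul continuous_id).intervalIntegrable A B
    · exact intervalIntegrable_const
  rw [h1, intervalIntegral.integral_const, intervalIntegral.integral_const_mul,
    integral_id, smul_eq_mul]
  ring

lemma robinG_cont (α x : ℝ) : Continuous (fun y => robinG α x y) := by
  unfold robinG
  fun_prop

lemma integral_robinG {α x : ℝ} (hα : 0 < α) (hx : x ∈ Icc (-π) π) :
    ∫ y in (-π)..π, robinG α x y = -x^2/2 + π/α + π^2/2 := by
  have hπ : 0 < π := pi_pos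
  have hc : 0 < cA α := cA_pos hα
  obtain ⟨hx1, hx2⟩ := hx
  have h1 : IntervalIntegrable (fun y => robinG α x y) volume (-π) x :=
    (robinG_cont α x).intervalIntegrable _ _
  have h2 : IntervalIntegrable (fun y => robinG α x y) volume x π :=
    (robinG_cont α x).intervalIntegrable _ _
  rw [← intervalIntegral.integral_add_adjacent_intervals h1 h2]
  have e1 : ∫ y in (-π)..x, robinG α x y
      = ∫ y in (-π)..x, (((1 - cA α * x)/2) * y + (1/(2*cA α) - x/2)) := by
    apply intervalIntegral.integral_congr
    intro y hy
    rw [Set.uIcc_of_le hx1] at hy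
    rw [robinG, abs_of_nonneg (by linarith [hy.2] : (0:ℝ) ≤ x - y)]
    ring
  have e2 : ∫ y in x..π, robinG α x y
      = ∫ y in x..π, ((-(1 + cA α * x)/2) * y + (1/(2*cA α) + x/2)) := by
    apply intervalIntegral.integral_congr
    intro y hy
    rw [Set.uIcc_of_le hx2] at hy
    rw [robinG, abs_of_nonpos (by linarith [hy.1] : x - y ≤ 0)]
    ring
  rw [e1, e2, affine_integral, affine_integral]
  have h1c : 1 / cA α = 1/α + π := inv_cA hα
  have hrw : 1/(2*cA α) = (1/α + π)/2 := by
    rw [← h1c]; ring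
  rw [hrw]
  have hα' : α ≠ 0 := ne_of_gt hα
  field_simp
  ring

lemma robinG_mul_intervalIntegrable {α x : ℝ} {f : ℝ → ℝ} {m M : ℝ} (hα : 0 < α)
    (hx : x ∈ Icc 0 π)
    (hint : IntegrableOn f (Icc (-π) π) volume)
    (hae : ∀ᵐ y ∂(volume.restrict (Icc (-π) π)), m ≤ f y ∧ f y ≤ M) :
    IntervalIntegrable (fun y => robinG α x y * f y) volume (-π) π := by
  have hπ : 0 < π := pi_pos
  have hc : 0 < cA α := cA_pos hα
  rw [intervalIntegrable_iff, Set.uIoc_of_le (by linarith : -π ≤ π)]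
  have hsub : Ioc (-π) π ⊆ Icc (-π) π := Ioc_subset_Icc_self
  have hfio : IntegrableOn f (Ioc (-π) π) volume := hint.mono_set hsub
  have hmeas : AEStronglyMeasurable (fun y => robinG α x y * f y)
      (volume.restrict (Ioc (-π) π)) :=
    (robinG_cont α x).aestronglyMeasurable.mul hfio.aestronglyMeasurable
  set C : ℝ := (π/2 + π + 1/(2*cA α)) * max |m| |M| with hC
  apply Integrable.mono' (integrable_const C) hmeas
  have hae' : ∀ᵐ y ∂(volume.restrict (Ioc (-π) π)), m ≤ f y ∧ f y ≤ M :=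
    ae_mono (Measure.restrict_mono hsub le_rfl) hae
  filter_upwards [hae', ae_restrict_mem measurableSet_Ioc] with y hy hmem
  have hGb : |robinG α x y| ≤ π/2 + π + 1/(2*cA α) := by
    rw [robinG]
    have hy1 : -π ≤ y := le_of_lt hmem.1
    have hy2 : y ≤ π := hmem.2
    have hax : |x - y| ≤ 2*π := by
      rw [abs_le]; constructor <;> [linarith [hx.1, hx.2]; linarith [hx.1, hx.2]]
    have h1 : |(-(1/2) * cA α * x * y)| ≤ π/2 := by
      rw [abs_le]
      have hcx : cA α * x ≤ cA α * π := by nlinarith [hx.2, hc]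
      have hcx0 : 0 ≤ cA α * x := mul_nonneg hc.le hx.1
      have hcπ : cA α * π < 1 := cA_pi_lt_one hα
      constructor <;> nlinarith [abs_le.1 (le_refl |y| ), hy1, hy2]
    have h2 : |(-(1/2) * |x - y|)| ≤ π := by
      rw [abs_mul, abs_abs]
      have : |(-(1/2) : ℝ)| = 1/2 := by norm_num
      rw [this]; linarith
    have h3 : |1 / (2 * cA α)| = 1/(2*cA α) := abs_of_pos (by positivity)
    calc |(-(1/2) * cA α * x * y - 1/2 * |x - y| + 1 / (2 * cA α))|
        ≤ |(-(1/2) * cA α * x * y - 1/2 * |x - y|)| + |1/(2*cA α)| := abs_add_le _ _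
      _ ≤ |(-(1/2) * cA α * x * y)| + |(-(1/2) * |x - y|)| + |1/(2*cA α)| := by
          have := abs_sub (-(1/2) * cA α * x * y) (1/2 * |x - y|)
          have h4 : |(1/2 * |x - y|)| = |(-(1/2) * |x - y|)| := by
            rw [abs_mul, abs_mul]; norm_num
          linarith [abs_sub_abs_le_abs_sub (-(1/2) * cA α * x * y) (1/2 * |x-y|),
            abs_sub_le (-(1/2) * cA α * x * y) 0 (1/2 * |x - y|)]
      _ ≤ π/2 + π + 1/(2*cA α) := by rw [h3]; linarith
  have hfb : |f y| ≤ max |m| |M| := by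
    rw [abs_le]
    constructor
    · calc -(max |m| |M|) ≤ -|m| := by simp [le_max_left]
        _ ≤ m := neg_abs_le m
        _ ≤ f y := hy.1
    · calc f y ≤ M := hy.2
        _ ≤ |M| := le_abs_self M
        _ ≤ max |m| |M| := le_max_right _ _
  calc ‖robinG α x y * f y‖ = |robinG α x y| * |f y| := abs_mul _ _
    _ ≤ (π/2 + π + 1/(2*cA α)) * max |m| |M| := by
        apply mul_le_mul hGb hfb (abs_nonneg _)
        positivity

lemma key_bound {m M s α x0 t : ℝ} {f : ℝ → ℝ} (hα : 0 < α) (hx0 : x0 ∈ Icc 0 π)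
    (hint : IntegrableOn f (Icc (-π) π) volume)
    (hae : ∀ᵐ y ∂(volume.restrict (Icc (-π) π)), m ≤ f y ∧ f y ≤ M)
    (hsum : (∫ x in (-π)..π, f x) = 2 * π * s) :
    robinSol α f x0 ≤ m * (-x0^2/2 + π/α + π^2/2) + 2*π*(s - m)*t
      + (M - m) * ∫ y in (-π)..π, max (robinG α x0 y - t) 0 := by
  have hπ : 0 < π := pi_pos
  have hab : (-π : ℝ) ≤ π := by linarith
  have iiG : IntervalIntegrable (fun y => robinG α x0 y) volume (-π) π :=
    (robinG_cont α x0).intervalIntegrable _ _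
  have iiP : IntervalIntegrable (fun y => max (robinG α x0 y - t) 0) volume (-π) π :=
    (((robinG_cont α x0).sub continuous_const).max continuous_const).intervalIntegrable _ _
  have iif : IntervalIntegrable f volume (-π) π := by
    rw [intervalIntegrable_iff, Set.uIoc_of_le hab]
    exact hint.mono_set Ioc_subset_Icc_self
  have iiGf : IntervalIntegrable (fun y => robinG α x0 y * f y) volume (-π) π :=
    robinG_mul_intervalIntegrable hα hx0 hint hae
  have iiRHS : IntervalIntegrable
      (fun y => m * robinG α x0 y + t * (f y - m)
        + (M - m) * max (robinG α x0 y - t) 0) volume (-π) π :=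
    ((iiG.const_mul m).add ((iif.sub intervalIntegrable_const).const_mul t)).add
      (iiP.const_mul (M - m))
  have hmono : robinSol α f x0 ≤ ∫ y in (-π)..π,
      (m * robinG α x0 y + t * (f y - m) + (M - m) * max (robinG α x0 y - t) 0) := by
    rw [robinSol]
    apply intervalIntegral.integral_mono_ae_restrict hab iiGf iiRHS
    filter_upwards [hae] with y hy
    rcases le_or_gt t (robinG α x0 y) with h | h
    · rw [max_eq_left (by linarith : (0:ℝ) ≤ robinG α x0 y - t)]
      nlinarith [mul_nonneg (by linarith : (0:ℝ) ≤ robinG α x0 y - t)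
        (by linarith [hy.2] : (0:ℝ) ≤ M - f y)]
    · rw [max_eq_right (by linarith : robinG α x0 y - t ≤ (0:ℝ))]
      nlinarith [mul_nonneg (by linarith : (0:ℝ) ≤ t - robinG α x0 y)
        (by linarith [hy.1] : (0:ℝ) ≤ f y - m)]
  have hsplit : ∫ y in (-π)..π,
      (m * robinG α x0 y + t * (f y - m) + (M - m) * max (robinG α x0 y - t) 0)
      = m * (∫ y in (-π)..π, robinG α x0 y) + t * ((∫ y in (-π)..π, f y) - 2*π*m)
        + (M - m) * ∫ y in (-π)..π, max (robinG α x0 y - t) 0 := by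
    rw [intervalIntegral.integral_add ((iiG.const_mul m).add
      ((iif.sub intervalIntegrable_const).const_mul t)) (iiP.const_mul (M - m)),
      intervalIntegral.integral_add (iiG.const_mul m)
        ((iif.sub intervalIntegrable_const).const_mul t),
      intervalIntegral.integral_const_mul, intervalIntegral.integral_const_mul,
      intervalIntegral.integral_const_mul,
      intervalIntegral.integral_sub iif intervalIntegrable_const,
      intervalIntegral.integral_const, smul_eq_mul]
    ring
  have hG : ∫ y in (-π)..π, robinG α x0 y = -x0^2/2 + π/α + π^2/2 :=
    integral_robinG hα ⟨by linarith [hx0.1], hx0.2⟩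
  rw [hsplit, hG, hsum] at hmono
  linarith [hmono]

set_option maxHeartbeats 1000000 in
lemma case1_bound {α x l : ℝ} (hα : 0 < α) (hx : x ∈ Icc 0 π) (hl : 0 < l) (hlπ : l < π)
    (hcase : x * (1 - l * cA α) < π - l) :
    2*l*(1/(2*cA α) - cA α*x^2/2 - l*(1-(cA α*x)^2)/2)
      + (∫ y in (-π)..π, max (robinG α x y - (1/(2*cA α) - cA α*x^2/2 - l*(1-(cA α*x)^2)/2)) 0)
      ≤ (l / cA α) * (1 - l * cA α/2) * (1 - x^2 * (cA α)^2) := by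
  have hπ : 0 < π := pi_pos
  have hc : 0 < cA α := cA_pos hα
  have hcπ : cA α * π < 1 := cA_pi_lt_one hα
  obtain ⟨hx0, hxπ⟩ := hx
  set c := cA α with hcc
  set t1 : ℝ := 1/(2*c) - c*x^2/2 - l*(1-(c*x)^2)/2 with ht1
  set a : ℝ := x - l*(1+c*x) with ha
  set b : ℝ := x + l*(1-c*x) with hb
  set A : ℝ := min a (-π) with hA
  have he0 : 0 ≤ c*x := mul_nonneg hc.le hx0
  have he1 : c*x < 1 := by nlinarith
  have hax : a ≤ x := by rw [ha]; nlinarith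
  have hxb : x ≤ b := by rw [hb]; nlinarith
  have hbπ : b ≤ π := by rw [hb]; nlinarith
  have hAπ : A ≤ -π := min_le_right _ _
  have hAa : A ≤ a := min_le_left _ _
  have hPc : Continuous (fun y => max (robinG α x y - t1) 0) :=
    ((robinG_cont α x).sub continuous_const).max continuous_const
  have hii : ∀ u v : ℝ, IntervalIntegrable (fun y => max (robinG α x y - t1) 0) volume u v :=
    fun u v => hPc.intervalIntegrable u v
  -- step 1 : enlarge domain
  have step1 : (∫ y in (-π)..π, max (robinG α x y - t1) 0)
      ≤ ∫ y in A..π, max (robinG α x y - t1) 0 := by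
    have hadd := intervalIntegral.integral_add_adjacent_intervals (hii A (-π)) (hii (-π) π)
    have h0 : 0 ≤ ∫ y in A..(-π), max (robinG α x y - t1) 0 :=
      intervalIntegral.integral_nonneg hAπ (fun u _ => le_max_right _ _)
    linarith
  -- step 2 : split
  have step2 : (∫ y in A..π, max (robinG α x y - t1) 0)
      = (∫ y in A..a, max (robinG α x y - t1) 0)
        + (∫ y in a..x, max (robinG α x y - t1) 0)
        + (∫ y in x..b, max (robinG α x y - t1) 0)
        + (∫ y in b..π, max (robinG α x y - t1) 0) := by
    rw [intervalIntegral.integral_add_adjacent_intervals (hii A a) (hii a x),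
      intervalIntegral.integral_add_adjacent_intervals
        ((hii A a).trans (hii a x)) (hii x b),
      intervalIntegral.integral_add_adjacent_intervals
        (((hii A a).trans (hii a x)).trans (hii x b)) (hii b π)]
  have piece1 : (∫ y in A..a, max (robinG α x y - t1) 0) = 0 := by
    rw [intervalIntegral.integral_congr (g := fun _ => (0:ℝ))
      (fun y hy => ?_), intervalIntegral.integral_zero]
    rw [Set.uIcc_of_le hAa] at hy
    have hya : y ≤ a := hy.2
    rw [ha] at hya
    apply max_eq_right
    rw [robinG, ← hcc, ht1]
    have h5 : x - y ≤ |x - y| := le_abs_self _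
    nlinarith [mul_nonneg (by linarith : (0:ℝ) ≤ 1 - c*x)
      (by linarith : (0:ℝ) ≤ (x - y) - l*(1+c*x)), h5]
  have piece2 : (∫ y in a..x, max (robinG α x y - t1) 0)
      = ((1-c*x)/2)*(x^2-a^2)/2 + (1/(2*c) - x/2 - t1)*(x-a) := by
    rw [intervalIntegral.integral_congr
      (g := fun y => ((1-c*x)/2) * y + (1/(2*c) - x/2 - t1)) (fun y hy => ?_),
      affine_integral]
    rw [Set.uIcc_of_le hax] at hy
    obtain ⟨hy1, hy2⟩ := hy
    have hval : robinG α x y - t1 = ((1-c*x)/2) * y + (1/(2*c) - x/2 - t1) := by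
      rw [robinG, ← hcc, abs_of_nonneg (by linarith : (0:ℝ) ≤ x - y)]
      ring
    show max (robinG α x y - t1) 0 = _
    rw [hval]
    rw [ha] at hy1
    apply max_eq_left
    rw [ht1]
    nlinarith [mul_nonneg (by linarith : (0:ℝ) ≤ 1 - c*x)
      (by linarith : (0:ℝ) ≤ y - (x - l*(1+c*x)))]
  have piece3 : (∫ y in x..b, max (robinG α x y - t1) 0)
      = (-(1+c*x)/2)*(b^2-x^2)/2 + (1/(2*c) + x/2 - t1)*(b-x) := by
    rw [intervalIntegral.integral_congr
      (g := fun y => (-(1+c*x)/2) * y + (1/(2*c) + x/2 - t1)) (fun y hy => ?_),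
      affine_integral]
    rw [Set.uIcc_of_le hxb] at hy
    obtain ⟨hy1, hy2⟩ := hy
    have hval : robinG α x y - t1 = (-(1+c*x)/2) * y + (1/(2*c) + x/2 - t1) := by
      rw [robinG, ← hcc, abs_of_nonpos (by linarith : x - y ≤ (0:ℝ))]
      ring
    show max (robinG α x y - t1) 0 = _
    rw [hval]
    rw [hb] at hy2
    apply max_eq_left
    rw [ht1]
    nlinarith [mul_nonneg (by linarith : (0:ℝ) ≤ 1 + c*x)
      (by linarith : (0:ℝ) ≤ (x + l*(1-c*x)) - y)]
  have piece4 : (∫ y in b..π, max (robinG α x y - t1) 0) = 0 := by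
    rw [intervalIntegral.integral_congr (g := fun _ => (0:ℝ))
      (fun y hy => ?_), intervalIntegral.integral_zero]
    rw [Set.uIcc_of_le hbπ] at hy
    have hyb : b ≤ y := hy.1
    rw [hb] at hyb
    apply max_eq_right
    rw [robinG, ← hcc, ht1]
    have h5 : y - x ≤ |x - y| := by rw [abs_sub_comm]; exact le_abs_self _
    nlinarith [mul_nonneg (by linarith : (0:ℝ) ≤ 1 + c*x)
      (by linarith : (0:ℝ) ≤ y - (x + l*(1-c*x))), h5]
  have hfinal : 2*l*t1 + (0 + (((1-c*x)/2)*(x^2-a^2)/2 + (1/(2*c) - x/2 - t1)*(x-a))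
      + ((-(1+c*x)/2)*(b^2-x^2)/2 + (1/(2*c) + x/2 - t1)*(b-x)) + 0)
      = (l / c) * (1 - l * c/2) * (1 - x^2 * c^2) := by
    rw [ht1, ha, hb]
    field_simp
    ring
  calc 2*l*t1 + (∫ y in (-π)..π, max (robinG α x y - t1) 0)
      ≤ 2*l*t1 + ∫ y in A..π, max (robinG α x y - t1) 0 := by linarith
    _ = 2*l*t1 + (0 + (((1-c*x)/2)*(x^2-a^2)/2 + (1/(2*c) - x/2 - t1)*(x-a))
        + ((-(1+c*x)/2)*(b^2-x^2)/2 + (1/(2*c) + x/2 - t1)*(b-x)) + 0) := by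
        rw [step2, piece1, piece2, piece3, piece4]
    _ = (l / c) * (1 - l * c/2) * (1 - x^2 * c^2) := hfinal

set_option maxHeartbeats 1000000 in
lemma case2_bound {α x l : ℝ} (hα : 0 < α) (hx : x ∈ Icc 0 π) (hl : 0 < l) (hlπ : l < π)
    (hcase : π - l ≤ x * (1 - l * cA α)) :
    2*l*(-(cA α)*x*(π-2*l)/2 + (π-2*l-x)/2 + 1/(2*cA α))
      + (∫ y in (-π)..π, max (robinG α x y
          - (-(cA α)*x*(π-2*l)/2 + (π-2*l-x)/2 + 1/(2*cA α))) 0)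
      ≤ (1/2)*(π-x)^2 + l*(1-(cA α)*x)*(2*π-l+1/α) := by
  have hπ : 0 < π := pi_pos
  have hc : 0 < cA α := cA_pos hα
  have hcπ : cA α * π < 1 := cA_pi_lt_one hα
  obtain ⟨hx0, hxπ⟩ := hx
  set c := cA α with hcc
  set t2 : ℝ := -c*x*(π-2*l)/2 + (π-2*l-x)/2 + 1/(2*c) with ht2
  set d : ℝ := π - 2*l with hd
  have he0 : 0 ≤ c*x := mul_nonneg hc.le hx0
  have he1 : c*x < 1 := by nlinarith
  have hu : π - x ≤ l*(1 - c*x) := by nlinarith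
  have hd1 : -π ≤ d := by rw [hd]; linarith
  have hd2 : d ≤ x := by rw [hd]; nlinarith
  have hPc : Continuous (fun y => max (robinG α x y - t2) 0) :=
    ((robinG_cont α x).sub continuous_const).max continuous_const
  have hii : ∀ u v : ℝ, IntervalIntegrable (fun y => max (robinG α x y - t2) 0) volume u v :=
    fun u v => hPc.intervalIntegrable u v
  have step2 : (∫ y in (-π)..π, max (robinG α x y - t2) 0)
      = (∫ y in (-π)..d, max (robinG α x y - t2) 0)
        + (∫ y in d..x, max (robinG α x y - t2) 0)
        + (∫ y in x..π, max (robinG α x y - t2) 0) := by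
    rw [intervalIntegral.integral_add_adjacent_intervals (hii (-π) d) (hii d x),
      intervalIntegral.integral_add_adjacent_intervals
        ((hii (-π) d).trans (hii d x)) (hii x π)]
  have piece1 : (∫ y in (-π)..d, max (robinG α x y - t2) 0) = 0 := by
    rw [intervalIntegral.integral_congr (g := fun _ => (0:ℝ))
      (fun y hy => ?_), intervalIntegral.integral_zero]
    rw [Set.uIcc_of_le hd1] at hy
    have hyd : y ≤ d := hy.2
    rw [hd] at hyd
    apply max_eq_right
    rw [robinG, ← hcc, ht2, hd]
    have h5 : x - y ≤ |x - y| := le_abs_self _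
    nlinarith [mul_nonneg (by linarith : (0:ℝ) ≤ 1 - c*x)
      (by linarith : (0:ℝ) ≤ (π - 2*l) - y), h5]
  have piece2 : (∫ y in d..x, max (robinG α x y - t2) 0)
      = ((1-c*x)/2)*(x^2-d^2)/2 + (1/(2*c) - x/2 - t2)*(x-d) := by
    rw [intervalIntegral.integral_congr
      (g := fun y => ((1-c*x)/2) * y + (1/(2*c) - x/2 - t2)) (fun y hy => ?_),
      affine_integral]
    rw [Set.uIcc_of_le hd2] at hy
    obtain ⟨hy1, hy2⟩ := hy
    rw [hd] at hy1
    have hval : robinG α x y - t2 = ((1-c*x)/2) * y + (1/(2*c) - x/2 - t2) := by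
      rw [robinG, ← hcc, abs_of_nonneg (by linarith : (0:ℝ) ≤ x - y)]
      ring
    show max (robinG α x y - t2) 0 = _
    rw [hval]
    apply max_eq_left
    rw [ht2, hd]
    nlinarith [mul_nonneg (by linarith : (0:ℝ) ≤ 1 - c*x)
      (by linarith : (0:ℝ) ≤ y - (π - 2*l))]
  have piece3 : (∫ y in x..π, max (robinG α x y - t2) 0)
      = (-(1+c*x)/2)*(π^2-x^2)/2 + (1/(2*c) + x/2 - t2)*(π-x) := by
    rw [intervalIntegral.integral_congr
      (g := fun y => (-(1+c*x)/2) * y + (1/(2*c) + x/2 - t2)) (fun y hy => ?_),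
      affine_integral]
    rw [Set.uIcc_of_le hxπ] at hy
    obtain ⟨hy1, hy2⟩ := hy
    have hval : robinG α x y - t2 = (-(1+c*x)/2) * y + (1/(2*c) + x/2 - t2) := by
      rw [robinG, ← hcc, abs_of_nonpos (by linarith : x - y ≤ (0:ℝ))]
      ring
    show max (robinG α x y - t2) 0 = _
    rw [hval]
    apply max_eq_left
    rw [ht2, hd]
    nlinarith [mul_nonneg (by linarith : (0:ℝ) ≤ 1 + c*x)
      (by linarith : (0:ℝ) ≤ π - y), hu]
  have hβ : (1:ℝ)/α = 1/c - π := by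
    have := inv_cA hα
    rw [← hcc] at this
    linarith
  have hid : 2*l*t2 + (0 + (((1-c*x)/2)*(x^2-d^2)/2 + (1/(2*c) - x/2 - t2)*(x-d))
      + ((-(1+c*x)/2)*(π^2-x^2)/2 + (1/(2*c) + x/2 - t2)*(π-x)))
      = (1/2)*(π-x)^2 + l*(1-c*x)*(2*π-l+1/α) - (π-x)^2 := by
    rw [hβ, ht2, hd]
    field_simp
    ring
  calc 2*l*t2 + (∫ y in (-π)..π, max (robinG α x y - t2) 0)
      = 2*l*t2 + (0 + (((1-c*x)/2)*(x^2-d^2)/2 + (1/(2*c) - x/2 - t2)*(x-d))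
        + ((-(1+c*x)/2)*(π^2-x^2)/2 + (1/(2*c) + x/2 - t2)*(π-x))) := by
        rw [step2, piece1, piece2, piece3]
    _ = (1/2)*(π-x)^2 + l*(1-c*x)*(2*π-l+1/α) - (π-x)^2 := hid
    _ ≤ (1/2)*(π-x)^2 + l*(1-c*x)*(2*π-l+1/α) := by nlinarith [sq_nonneg (π-x)]

set_option maxHeartbeats 1000000 in
/-- Theorem 2 (right inequality): upper bound for the temperature at `x₀`. -/
theorem temp_upper_bound (m M s α x0 : ℝ) (hm : 0 ≤ m) (hms : m < s) (hsM : s < M)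
    (hα : 0 < α) (hx0 : x0 ∈ Set.Icc 0 π) (f : ℝ → ℝ) (hf : memF m M s f) :
    robinSol α f x0 ≤ eta α x0 * m + (M - m) * nu α x0 (π * (s - m) / (M - m)) := by
  obtain ⟨hint, hae, hsum⟩ := hf
  have hπ : 0 < π := pi_pos
  have hc : 0 < cA α := cA_pos hα
  have hMm : 0 < M - m := by linarith
  set l := π * (s - m) / (M - m) with hl
  have hl0 : 0 < l := div_pos (mul_pos hπ (by linarith)) hMm
  have hlπ : l < π := by
    rw [hl, div_lt_iff₀ hMm]
    nlinarith
  have hfact : 2*π*(s-m) = (M-m)*(2*l) := by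
    rw [hl]
    field_simp
  unfold nu eta
  split_ifs with hcond
  · -- interior case
    set t : ℝ := 1/(2*cA α) - cA α*x0^2/2 - l*(1-(cA α*x0)^2)/2 with ht
    have hk := key_bound (t := t) hα hx0 hint hae hsum
    have hb := case1_bound hα hx0 hl0 hlπ hcond
    rw [← ht] at hb
    have h4 := mul_le_mul_of_nonneg_left hb (le_of_lt hMm)
    rw [mul_add] at h4
    have h2 : 2*π*(s-m)*t = (M-m)*(2*l*t) := by rw [hfact]; ring
    rw [h2] at hk
    nlinarith [hk, h4]
  · -- boundary case
    have hcond' : π - l ≤ x0 * (1 - l * cA α) := not_lt.1 hcond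
    set t : ℝ := -(cA α)*x0*(π-2*l)/2 + (π-2*l-x0)/2 + 1/(2*cA α) with ht
    have hk := key_bound (t := t) hα hx0 hint hae hsum
    have hb := case2_bound hα hx0 hl0 hlπ hcond'
    rw [← ht] at hb
    have h4 := mul_le_mul_of_nonneg_left hb (le_of_lt hMm)
    rw [mul_add] at h4
    have h2 : 2*π*(s-m)*t = (M-m)*(2*l*t) := by rw [hfact]; ring
    rw [h2] at hk
    nlinarith [hk, h4]
end

section
/- Let 0 ≤ m < s < M, α > 0, x_0 ∈ [−π,π], and let f ∈ 𝔉(m,M,s). Set l = π(s−m)/(M−m). Then u_f(x_0) − u_f(−π) ≤ m·(η_α(x_0) − η_α(−π)) + (M−m)·τ_α(x_0,l). -/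
set_option maxHeartbeats 4000000

open MeasureTheory Real Set Filter

noncomputable def tau (α x l : ℝ) : ℝ :=
  if x + l - l * cA α * (π + x) < π - l then
    (1/2) * (x + l - l * cA α * (π + x))^2 - x^2/2 + π * l - l^2/2
  else
    -x^2/2 + π^2/2 + (x * (1 - l * cA α) + l * (1 - π * cA α)) * (π - l)

lemma lin_int (A B u v : ℝ) : ∫ y in u..v, (A * y + B) = A * ((v^2 - u^2)/2) + B * (v - u) := by
  have h1 : IntervalIntegrable (fun y : ℝ => A * y) volume u v :=
    Continuous.intervalIntegrable (by continuity) u v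
  rw [intervalIntegral.integral_add h1 intervalIntegrable_const]
  rw [intervalIntegral.integral_const_mul, integral_id, intervalIntegral.integral_const]
  simp [smul_eq_mul]; ring

/-- Theorem 3 (inequality): gap between the spot `x₀` and the left edge. -/
theorem edge_gap_bound (m M s α x0 : ℝ) (hm : 0 ≤ m) (hms : m < s) (hsM : s < M)
    (hα : 0 < α) (hx0 : x0 ∈ Set.Icc (-π) π) (f : ℝ → ℝ) (hf : memF m M s f) :
    robinSol α f x0 - robinSol α f (-π) ≤
      m * (eta α x0 - eta α (-π)) + (M - m) * tau α x0 (π * (s - m) / (M - m)) := by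
  obtain ⟨hfint, hfbd, hfsum⟩ := hf
  obtain ⟨hx0l, hx0r⟩ := hx0
  have hπ := Real.pi_pos
  have hle : (-π : ℝ) ≤ π := by linarith
  have hαπ : (0:ℝ) < 1 + α * π := by positivity
  set c := cA α with hcdef
  have hc : 0 < c := by rw [hcdef, cA]; positivity
  have hπc : π * c < 1 := by
    rw [hcdef, cA, mul_div_assoc', div_lt_one hαπ]; linarith
  have hMm : 0 < M - m := by linarith
  set l := π * (s - m) / (M - m) with hldef
  have hl0 : 0 < l := by
    rw [hldef]; exact div_pos (by nlinarith) hMm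
  have hlπ : l < π := by
    rw [hldef, div_lt_iff₀ hMm]; nlinarith
  set a := 1 - c * (π + x0) with hadef
  have hb1 : 0 ≤ c * (π + x0) := mul_nonneg hc.le (by linarith)
  have hb2 : c * (π + x0) < 2 := by nlinarith
  have ha1 : 0 < 1 + a := by rw [hadef]; linarith
  have ha2 : a ≤ 1 := by rw [hadef]; linarith
  have hlc : l * c < 1 := by nlinarith
  set K : ℝ → ℝ := fun y => (a * y + π - |x0 - y|) / 2 with hKdef
  have hKcont : Continuous K := by
    apply Continuous.div_const
    exact ((continuous_const.mul continuous_id).add continuous_const).sub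
      (continuous_const.sub continuous_id).abs
  -- integrability facts
  have hfIoc : IntegrableOn f (Ioc (-π) π) volume := hfint.mono_set Ioc_subset_Icc_self
  have hf_ii : IntervalIntegrable f volume (-π) π := by
    rw [intervalIntegrable_iff, uIoc_of_le hle]; exact hfIoc
  have hGint : ∀ x : ℝ, IntegrableOn (fun y => robinG α x y * f y) (Ioc (-π) π) volume := by
    intro x
    have hGc : Continuous (fun y => robinG α x y) := by
      unfold robinG
      exact ((continuous_const.mul continuous_id).sub
        (continuous_const.mul (continuous_const.sub continuous_id).abs)).add continuous_const
    obtain ⟨C, hC⟩ := (isCompact_Icc : IsCompact (Icc (-π) π)).exists_bound_of_continuousOn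
      hGc.continuousOn
    exact Integrable.bdd_mul (c := C) hfIoc hGc.aestronglyMeasurable
      ((ae_restrict_iff' measurableSet_Ioc).2 (Filter.Eventually.of_forall
        fun y hy => hC y (Ioc_subset_Icc_self hy)))
  have hKf_int : IntervalIntegrable (fun y => K y * f y) volume (-π) π := by
    rw [intervalIntegrable_iff, uIoc_of_le hle]
    obtain ⟨C, hC⟩ := (isCompact_Icc : IsCompact (Icc (-π) π)).exists_bound_of_continuousOn
      hKcont.continuousOn
    exact Integrable.bdd_mul (c := C) hfIoc hKcont.aestronglyMeasurable
      ((ae_restrict_iff' measurableSet_Ioc).2 (Filter.Eventually.of_forall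
        fun y hy => hC y (Ioc_subset_Icc_self hy)))
  -- Step A : rewrite the difference
  have hsplit : robinSol α f x0 - robinSol α f (-π) = ∫ y in (-π)..π, K y * f y := by
    unfold robinSol
    rw [intervalIntegral.integral_of_le hle, intervalIntegral.integral_of_le hle,
      intervalIntegral.integral_of_le hle, ← integral_sub (hGint x0) (hGint (-π))]
    apply setIntegral_congr_fun measurableSet_Ioc
    intro y hy
    have h1 : |(-π : ℝ) - y| = π + y := by
      rw [abs_of_nonpos (by linarith [hy.1])]; ring
    simp only [robinG, hKdef, ← hcdef, hadef]
    rw [h1]; ring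
  -- integral of K
  have hIK : (∫ y in (-π)..π, K y) = π^2/2 - x0^2/2 := by
    rw [← intervalIntegral.integral_add_adjacent_intervals
      (hKcont.intervalIntegrable (-π) x0) (hKcont.intervalIntegrable x0 π)]
    have e1 : (∫ y in (-π)..x0, K y) = ∫ y in (-π)..x0, (((a+1)/2) * y + (π - x0)/2) := by
      apply intervalIntegral.integral_congr
      intro y hy
      rw [uIcc_of_le hx0l] at hy
      simp only [hKdef]
      rw [abs_of_nonneg (by linarith [hy.2] : (0:ℝ) ≤ x0 - y)]; ring
    have e2 : (∫ y in x0..π, K y) = ∫ y in x0..π, (((a-1)/2) * y + (x0 + π)/2) := by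
      apply intervalIntegral.integral_congr
      intro y hy
      rw [uIcc_of_le hx0r] at hy
      simp only [hKdef]
      rw [abs_of_nonpos (by linarith [hy.1] : x0 - y ≤ 0)]; ring
    rw [e1, e2, lin_int, lin_int]; ring
  -- key bound with cut level t
  have key : ∀ t : ℝ, (∫ y in (-π)..π, K y * f y) ≤
      m * (π^2/2 - x0^2/2) + (M - m) * (∫ y in (-π)..π, max (K y - t) 0)
        + t * (2*π*s - 2*π*m) := by
    intro t
    have hg1 : IntervalIntegrable (fun y => m * K y) volume (-π) π :=
      (continuous_const.mul hKcont).intervalIntegrable _ _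
    have hmaxc : Continuous (fun y => max (K y - t) 0) :=
      (hKcont.sub continuous_const).max continuous_const
    have hg2 : IntervalIntegrable (fun y => (M - m) * max (K y - t) 0) volume (-π) π :=
      (continuous_const.mul hmaxc).intervalIntegrable _ _
    have hg3 : IntervalIntegrable (fun y => t * (f y - m)) volume (-π) π :=
      (hf_ii.sub intervalIntegrable_const).const_mul t
    have hae : (fun y => K y * f y) ≤ᵐ[volume.restrict (Icc (-π) π)]
        (fun y => m * K y + (M - m) * max (K y - t) 0 + t * (f y - m)) := by
      filter_upwards [hfbd] with y hy
      obtain ⟨h1, h2⟩ := hy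
      have key2 : (f y - m) * (K y - t) ≤ (M - m) * max (K y - t) 0 := by
        rcases le_total (K y - t) 0 with h | h
        · have h3 := mul_nonpos_of_nonneg_of_nonpos (by linarith : (0:ℝ) ≤ f y - m) h
          have h4 : (0:ℝ) ≤ (M - m) * max (K y - t) 0 :=
            mul_nonneg (by linarith) (le_max_right _ _)
          linarith
        · rw [max_eq_left h]
          exact mul_le_mul_of_nonneg_right (by linarith) h
      nlinarith [key2]
    have hmono := intervalIntegral.integral_mono_ae_restrict hle hKf_int
      ((hg1.add hg2).add hg3) hae
    rw [intervalIntegral.integral_add (hg1.add hg2) hg3,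
      intervalIntegral.integral_add hg1 hg2,
      intervalIntegral.integral_const_mul, intervalIntegral.integral_const_mul,
      intervalIntegral.integral_const_mul,
      intervalIntegral.integral_sub hf_ii intervalIntegrable_const, hfsum,
      intervalIntegral.integral_const, hIK] at hmono
    refine hmono.trans_eq ?_
    simp only [smul_eq_mul]; ring
  have h2ls : 2*π*s - 2*π*m = 2*l*(M - m) := by
    rw [hldef]; field_simp
  rw [hsplit]
  -- case split
  by_cases hcase : x0 + l - l * c * (π + x0) < π - l
  · -- interior case
    set p := x0 - l * (c * (π + x0)) with hpdef
    set q := x0 + l * (1 + a) with hqdef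
    set t := ((a-1)/2) * q + (x0 + π)/2 with htdef
    have hpx : p ≤ x0 := by
      rw [hpdef]; nlinarith
    have hpl : -π ≤ p := by
      rw [hpdef]
      nlinarith [mul_nonneg (by linarith : (0:ℝ) ≤ π + x0) (by linarith : (0:ℝ) ≤ 1 - l*c)]
    have hxq : x0 ≤ q := by rw [hqdef]; nlinarith
    have hqπ : q ≤ π := by rw [hqdef, hadef]; nlinarith [hcase]
    have hL1p : ((a+1)/2) * p + (π - x0)/2 = t := by
      rw [htdef, hqdef, hpdef, hadef]; ring
    have hmaxc : Continuous (fun y => max (K y - t) 0) :=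
      (hKcont.sub continuous_const).max continuous_const
    have ii : ∀ u v : ℝ, IntervalIntegrable (fun y => max (K y - t) 0) volume u v :=
      fun u v => hmaxc.intervalIntegrable u v
    have hJ : (∫ y in (-π)..π, max (K y - t) 0)
        = ((a+1)/2) * ((x0^2 - p^2)/2) + ((π - x0)/2 - t) * (x0 - p)
          + (((a-1)/2) * ((q^2 - x0^2)/2) + ((x0 + π)/2 - t) * (q - x0)) := by
      rw [← intervalIntegral.integral_add_adjacent_intervals (ii (-π) p) (ii p π),
        ← intervalIntegral.integral_add_adjacent_intervals (ii p x0) (ii x0 π),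
        ← intervalIntegral.integral_add_adjacent_intervals (ii x0 q) (ii q π)]
      have e1 : (∫ y in (-π)..p, max (K y - t) 0) = ∫ y in (-π)..p, (0:ℝ) := by
        apply intervalIntegral.integral_congr
        intro y hy
        rw [uIcc_of_le hpl] at hy
        have hyx : y ≤ x0 := le_trans hy.2 hpx
        have hKle : K y ≤ ((a+1)/2) * y + (π - x0)/2 := by
          simp only [hKdef]
          have := le_abs_self (x0 - y)
          linarith
        have hKt : K y ≤ t := by
          rw [← hL1p]; nlinarith [hy.2]
        show max (K y - t) 0 = 0
        exact max_eq_right (by linarith : K y - t ≤ 0)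
      have e2 : (∫ y in p..x0, max (K y - t) 0)
          = ∫ y in p..x0, (((a+1)/2) * y + ((π - x0)/2 - t)) := by
        apply intervalIntegral.integral_congr
        intro y hy
        rw [uIcc_of_le hpx] at hy
        have habs : |x0 - y| = x0 - y := abs_of_nonneg (by linarith [hy.2])
        have hKeq : K y = ((a+1)/2) * y + (π - x0)/2 := by
          simp only [hKdef]; rw [habs]; ring
        have hKt : t ≤ K y := by rw [hKeq, ← hL1p]; nlinarith [hy.1]
        show max (K y - t) 0 = ((a+1)/2) * y + ((π - x0)/2 - t)
        rw [max_eq_left (by linarith : 0 ≤ K y - t), hKeq]; ring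
      have e3 : (∫ y in x0..q, max (K y - t) 0)
          = ∫ y in x0..q, (((a-1)/2) * y + ((x0 + π)/2 - t)) := by
        apply intervalIntegral.integral_congr
        intro y hy
        rw [uIcc_of_le hxq] at hy
        have habs : |x0 - y| = -(x0 - y) := abs_of_nonpos (by linarith [hy.1])
        have hKeq : K y = ((a-1)/2) * y + (x0 + π)/2 := by
          simp only [hKdef]; rw [habs]; ring
        have hKt : t ≤ K y := by rw [hKeq, htdef]; nlinarith [hy.2]
        show max (K y - t) 0 = ((a-1)/2) * y + ((x0 + π)/2 - t)
        rw [max_eq_left (by linarith : 0 ≤ K y - t), hKeq]; ring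
      have e4 : (∫ y in q..π, max (K y - t) 0) = ∫ y in q..π, (0:ℝ) := by
        apply intervalIntegral.integral_congr
        intro y hy
        rw [uIcc_of_le hqπ] at hy
        have hKle : K y ≤ ((a-1)/2) * y + (x0 + π)/2 := by
          simp only [hKdef]
          have h5 : y - x0 ≤ |x0 - y| := by
            rw [abs_sub_comm]; exact le_abs_self _
          linarith
        have hKt : K y ≤ t := by
          have h6 : ((a-1)/2) * y ≤ ((a-1)/2) * q :=
            mul_le_mul_of_nonpos_left hy.1 (by linarith)
          rw [htdef]; linarith
        show max (K y - t) 0 = 0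
        exact max_eq_right (by linarith : K y - t ≤ 0)
      rw [e1, e2, e3, e4, lin_int, lin_int]
      simp
    calc (∫ y in (-π)..π, K y * f y)
        ≤ m * (π^2/2 - x0^2/2) + (M - m) * (∫ y in (-π)..π, max (K y - t) 0)
            + t * (2*π*s - 2*π*m) := key t
      _ = m * (eta α x0 - eta α (-π)) + (M - m) * tau α x0 l := by
          rw [hJ, h2ls]
          simp only [eta, tau, ← hcdef, if_pos hcase]
          rw [htdef, hqdef, hpdef, hadef]
          ring
      _ ≤ _ := le_refl _
  · -- boundary case
    set r := π - 2*l with hrdef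
    set t := ((a+1)/2) * r + (π - x0)/2 with htdef
    push_neg at hcase
    have hrl : -π ≤ r := by rw [hrdef]; linarith
    have hrx : r ≤ x0 := by rw [hrdef]; nlinarith [hcase, hb1, hl0]
    have hL2π : t ≤ ((a-1)/2) * π + (x0 + π)/2 := by
      rw [htdef, hrdef, hadef]; linarith [hcase]
    have hmaxc : Continuous (fun y => max (K y - t) 0) :=
      (hKcont.sub continuous_const).max continuous_const
    have ii : ∀ u v : ℝ, IntervalIntegrable (fun y => max (K y - t) 0) volume u v :=
      fun u v => hmaxc.intervalIntegrable u v
    have hJ : (∫ y in (-π)..π, max (K y - t) 0)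
        = ((a+1)/2) * ((x0^2 - r^2)/2) + ((π - x0)/2 - t) * (x0 - r)
          + (((a-1)/2) * ((π^2 - x0^2)/2) + ((x0 + π)/2 - t) * (π - x0)) := by
      rw [← intervalIntegral.integral_add_adjacent_intervals (ii (-π) r) (ii r π),
        ← intervalIntegral.integral_add_adjacent_intervals (ii r x0) (ii x0 π)]
      have e1 : (∫ y in (-π)..r, max (K y - t) 0) = ∫ y in (-π)..r, (0:ℝ) := by
        apply intervalIntegral.integral_congr
        intro y hy
        rw [uIcc_of_le hrl] at hy
        have hyx : y ≤ x0 := le_trans hy.2 hrx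
        have hKle : K y ≤ ((a+1)/2) * y + (π - x0)/2 := by
          simp only [hKdef]
          have := le_abs_self (x0 - y)
          linarith
        have hKt : K y ≤ t := by
          have h6 : ((a+1)/2) * y ≤ ((a+1)/2) * r :=
            mul_le_mul_of_nonneg_left hy.2 (by linarith)
          rw [htdef]; linarith
        show max (K y - t) 0 = 0
        exact max_eq_right (by linarith : K y - t ≤ 0)
      have e2 : (∫ y in r..x0, max (K y - t) 0)
          = ∫ y in r..x0, (((a+1)/2) * y + ((π - x0)/2 - t)) := by
        apply intervalIntegral.integral_congr
        intro y hy
        rw [uIcc_of_le hrx] at hy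
        have habs : |x0 - y| = x0 - y := abs_of_nonneg (by linarith [hy.2])
        have hKeq : K y = ((a+1)/2) * y + (π - x0)/2 := by
          simp only [hKdef]; rw [habs]; ring
        have hKt : t ≤ K y := by
          have h6 : ((a+1)/2) * r ≤ ((a+1)/2) * y :=
            mul_le_mul_of_nonneg_left hy.1 (by linarith)
          rw [hKeq, htdef]; linarith
        show max (K y - t) 0 = ((a+1)/2) * y + ((π - x0)/2 - t)
        rw [max_eq_left (by linarith : 0 ≤ K y - t), hKeq]; ring
      have e3 : (∫ y in x0..π, max (K y - t) 0)
          = ∫ y in x0..π, (((a-1)/2) * y + ((x0 + π)/2 - t)) := by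
        apply intervalIntegral.integral_congr
        intro y hy
        rw [uIcc_of_le hx0r] at hy
        have habs : |x0 - y| = -(x0 - y) := abs_of_nonpos (by linarith [hy.1])
        have hKeq : K y = ((a-1)/2) * y + (x0 + π)/2 := by
          simp only [hKdef]; rw [habs]; ring
        have hKt : t ≤ K y := by
          rw [hKeq]
          have h6 : ((a-1)/2) * π ≤ ((a-1)/2) * y :=
            mul_le_mul_of_nonpos_left hy.2 (by linarith)
          linarith [hL2π]
        show max (K y - t) 0 = ((a-1)/2) * y + ((x0 + π)/2 - t)
        rw [max_eq_left (by linarith : 0 ≤ K y - t), hKeq]; ring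
      rw [e1, e2, e3, lin_int, lin_int]
      simp
    have hτ : tau α x0 l = -x0^2/2 + π^2/2
        + (x0 * (1 - l * c) + l * (1 - π * c)) * (π - l) := by
      simp only [tau, ← hcdef]
      rw [if_neg (by push_neg; exact hcase)]
    have hslack : (∫ y in (-π)..π, max (K y - t) 0) + 2*l*t + (π - l)^2
        = -x0^2/2 + π^2/2 + (x0 * (1 - l * c) + l * (1 - π * c)) * (π - l) := by
      rw [hJ, htdef, hrdef, hadef]; ring
    calc (∫ y in (-π)..π, K y * f y)
        ≤ m * (π^2/2 - x0^2/2) + (M - m) * (∫ y in (-π)..π, max (K y - t) 0)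
            + t * (2*π*s - 2*π*m) := key t
      _ ≤ m * (eta α x0 - eta α (-π)) + (M - m) * tau α x0 l := by
          rw [h2ls, hτ]
          simp only [eta]
          nlinarith [sq_nonneg (π - l), hslack, hMm,
            mul_le_mul_of_nonneg_left (by nlinarith [sq_nonneg (π - l), hslack] :
              (∫ y in (-π)..π, max (K y - t) 0) + 2*l*t
                ≤ -x0^2/2 + π^2/2 + (x0 * (1 - l * c) + l * (1 - π * c)) * (π - l))
              (le_of_lt hMm)]
end

section
/- Fix α > 0 and x_0 ∈ [0,π]. For l ∈ (0,π) define a_m(l) = min(x_0(1−l·c_α), π−l). If 0 < l_1 < l_2 < π, then x_0 ∈ [a_m(l_1)−l_1, a_m(l_1)+l_1] and [a_m(l_1)−l_1, a_m(l_1)+l_1] ⊆ [a_m(l_2)−l_2, a_m(l_2)+l_2]. -/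
open MeasureTheory Real Set Filter

/-- Lemma 1, part 3: nesting of the maximizing intervals. -/
theorem lemma1_nesting (α x0 : ℝ) (hα : 0 < α) (hx0 : x0 ∈ Set.Icc 0 π)
    (am : ℝ → ℝ) (ham : am = fun l => min (x0 * (1 - l * cA α)) (π - l))
    (l1 l2 : ℝ) (h1 : 0 < l1) (h12 : l1 < l2) (h2 : l2 < π) :
    x0 ∈ Set.Icc (am l1 - l1) (am l1 + l1) ∧
    Set.Icc (am l1 - l1) (am l1 + l1) ⊆ Set.Icc (am l2 - l2) (am l2 + l2) := by
  have hπ := Real.pi_pos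
  obtain ⟨hx0l, hx0u⟩ := hx0
  have hden : 0 < 1 + α * π := by positivity
  have hc : 0 < cA α := div_pos hα hden
  have hcπ : cA α * π < 1 := by
    rw [cA, div_mul_eq_mul_div, div_lt_one hden]; nlinarith
  have hx0c : x0 * cA α < 1 := by nlinarith [hc.le]
  subst ham
  simp only
  refine ⟨⟨?_, ?_⟩, Set.Icc_subset_Icc ?_ ?_⟩
  · calc min (x0 * (1 - l1 * cA α)) (π - l1) - l1
        ≤ x0 * (1 - l1 * cA α) - l1 := sub_le_sub_right (min_le_left _ _) _
      _ ≤ x0 := by nlinarith [mul_nonneg (mul_nonneg hx0l h1.le) hc.le]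
  · have h := le_min (show x0 - l1 ≤ x0 * (1 - l1 * cA α) by nlinarith)
      (show x0 - l1 ≤ π - l1 by linarith)
    linarith
  · have h := min_le_min
      (show x0 * (1 - l2 * cA α) ≤ x0 * (1 - l1 * cA α) + (l2 - l1) by nlinarith [mul_nonneg (mul_nonneg hx0l hc.le) (sub_nonneg.mpr h12.le)])
      (show π - l2 ≤ (π - l1) + (l2 - l1) by linarith)
    rw [min_add_add_right] at h
    linarith
  · have h := min_le_min
      (show x0 * (1 - l1 * cA α) + (l2 - l1) ≤ x0 * (1 - l2 * cA α) + (l2 - l1) + (l2 - l1) by nlinarith [hc.le])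
      (show (π - l1) + (l2 - l1) ≤ (π - l2) + (l2 - l1) + (l2 - l1) by linarith)
    rw [min_add_add_right, min_add_add_right, min_add_add_right] at h
    linarith
end

section
/- Let α > 0, l > 0, and a ∈ ℝ with −π ≤ a−l < a+l ≤ π, and set I = [a−l, a+l]. Then for x ∈ [−π,π]: u_{χ_I}(x) = l·((1−a·c_α)x + (1/c_α − a)) if −π ≤ x ≤ a−l; u_{χ_I}(x) = −x²/2 + a(1−l·c_α)x + l/c_α − (a²+l²)/2 if a−l ≤ x ≤ a+l; and u_{χ_I}(x) = l·(−(1+a·c_α)x + (1/c_α + a)) if a+l ≤ x ≤ π. In particular, u_{χ_{[−π,π]}}(x) = −x²/2 + π/α + π²/2 for x ∈ [−π,π]. -/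
open MeasureTheory Real Set Filter

lemma abs_intble (x p q : ℝ) : IntervalIntegrable (fun y => |x - y|) volume p q :=
  (Continuous.abs (by continuity)).intervalIntegrable p q

lemma int_abs_left (x p q : ℝ) (hpq : p ≤ q) (hx : x ≤ p) :
    ∫ y in p..q, |x - y| = (q^2 - p^2)/2 - x*(q-p) := by
  have h : ∀ y ∈ Set.uIcc p q, |x - y| = y - x := by
    intro y hy
    rw [Set.uIcc_of_le hpq] at hy
    rw [abs_of_nonpos (by linarith [hy.1])]; ring
  rw [intervalIntegral.integral_congr h,
    intervalIntegral.integral_sub intervalIntegral.intervalIntegrable_id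
      intervalIntegrable_const,
    integral_id, intervalIntegral.integral_const]
  simp; ring

lemma int_abs_right (x p q : ℝ) (hpq : p ≤ q) (hx : q ≤ x) :
    ∫ y in p..q, |x - y| = x*(q-p) - (q^2 - p^2)/2 := by
  have h : ∀ y ∈ Set.uIcc p q, |x - y| = x - y := by
    intro y hy
    rw [Set.uIcc_of_le hpq] at hy
    exact abs_of_nonneg (by linarith [hy.2])
  rw [intervalIntegral.integral_congr h,
    intervalIntegral.integral_sub intervalIntegrable_const
      intervalIntegral.intervalIntegrable_id,
    integral_id, intervalIntegral.integral_const]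
  simp; ring

lemma int_abs_mid (x p q : ℝ) (hpx : p ≤ x) (hxq : x ≤ q) :
    ∫ y in p..q, |x - y| = ((x-p)^2 + (q-x)^2)/2 := by
  rw [← intervalIntegral.integral_add_adjacent_intervals (abs_intble x p x) (abs_intble x x q),
    int_abs_right x p x hpx le_rfl, int_abs_left x x q hxq le_rfl]
  ring

lemma int_robinG (α x p q : ℝ) :
    ∫ y in p..q, robinG α x y =
      (-(1/2)*cA α*x) * ((q^2-p^2)/2) - (1/2) * (∫ y in p..q, |x-y|)
        + (q-p) * (1/(2*cA α)) := by
  unfold robinG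
  have h1 : IntervalIntegrable (fun y => -(1/2) * cA α * x * y) volume p q :=
    (by continuity : Continuous fun y : ℝ => -(1/2) * cA α * x * y).intervalIntegrable p q
  have h2 : IntervalIntegrable (fun y => (1/2) * |x - y|) volume p q :=
    ((abs_intble x p q).const_mul _)
  rw [intervalIntegral.integral_add (h1.sub h2) intervalIntegrable_const,
    intervalIntegral.integral_sub h1 h2,
    intervalIntegral.integral_const_mul, integral_id,
    intervalIntegral.integral_const_mul, intervalIntegral.integral_const]
  simp only [smul_eq_mul]

lemma robinSol_ind (α p q : ℝ) (hp : -π ≤ p) (hpq : p ≤ q) (hq : q ≤ π) (x : ℝ) :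
    robinSol α ((Set.Icc p q).indicator (fun _ => (1:ℝ))) x = ∫ y in p..q, robinG α x y := by
  unfold robinSol
  have hfun : ∀ y, robinG α x y * (Set.Icc p q).indicator (fun _ => (1:ℝ)) y
      = (Set.Icc p q).indicator (fun y => robinG α x y) y := by
    intro y; by_cases hy : y ∈ Set.Icc p q <;> simp [hy]
  simp_rw [hfun]
  rw [intervalIntegral.integral_of_le (by linarith), intervalIntegral.integral_of_le hpq,
    ← MeasureTheory.integral_indicator measurableSet_Ioc]
  simp_rw [Set.indicator_indicator]
  rw [MeasureTheory.integral_indicator (measurableSet_Ioc.inter measurableSet_Icc)]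
  apply MeasureTheory.setIntegral_congr_set
  rw [MeasureTheory.ae_eq_set]
  constructor
  · refine measure_mono_null (fun y hy => ?_) (measure_singleton p)
    simp only [Set.mem_diff, Set.mem_inter_iff, Set.mem_Ioc, Set.mem_Icc] at hy
    have : y = p := le_antisymm (by by_contra h; exact hy.2 ⟨not_le.1 h, hy.1.2.2⟩) hy.1.2.1
    simp [this]
  · refine measure_mono_null (fun y hy => ?_) measure_empty
    obtain ⟨hy1, hy2⟩ := hy
    simp only [Set.mem_Ioc] at hy1
    exact absurd ⟨⟨by linarith [hy1.1], by linarith [hy1.2]⟩, ⟨le_of_lt hy1.1, hy1.2⟩⟩ hy2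

/-- Explicit formula (2.1) for the temperature generated by `χ_{I(a,l)}`,
and the special case of heating the whole rod. -/
theorem robinSol_indicator_formula (α l a : ℝ) (hα : 0 < α) (hl : 0 < l)
    (h1 : -π ≤ a - l) (h2 : a + l ≤ π) :
    (∀ x, -π ≤ x → x ≤ a - l →
      robinSol α ((Set.Icc (a - l) (a + l)).indicator (fun _ => (1:ℝ))) x =
        l * ((1 - a * cA α) * x + (1 / cA α - a))) ∧
    (∀ x, a - l ≤ x → x ≤ a + l →
      robinSol α ((Set.Icc (a - l) (a + l)).indicator (fun _ => (1:ℝ))) x =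
        -x^2/2 + a * (1 - l * cA α) * x + l / cA α - (a^2 + l^2)/2) ∧
    (∀ x, a + l ≤ x → x ≤ π →
      robinSol α ((Set.Icc (a - l) (a + l)).indicator (fun _ => (1:ℝ))) x =
        l * (-(1 + a * cA α) * x + (1 / cA α + a))) ∧
    (∀ x ∈ Set.Icc (-π) π,
      robinSol α ((Set.Icc (-π) π).indicator (fun _ => (1:ℝ))) x =
        -x^2/2 + π/α + π^2/2) := by
  have hc := cA_pos hα
  have hcne : cA α ≠ 0 := ne_of_gt hc
  refine ⟨?_, ?_, ?_, ?_⟩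
  · intro x hx1 hx2
    rw [robinSol_ind α (a-l) (a+l) h1 (by linarith) h2 x, int_robinG,
      int_abs_left x (a-l) (a+l) (by linarith) hx2]
    field_simp
    ring
  · intro x hx1 hx2
    rw [robinSol_ind α (a-l) (a+l) h1 (by linarith) h2 x, int_robinG,
      int_abs_mid x (a-l) (a+l) hx1 hx2]
    field_simp
    ring
  · intro x hx1 hx2
    rw [robinSol_ind α (a-l) (a+l) h1 (by linarith) h2 x, int_robinG,
      int_abs_right x (a-l) (a+l) (by linarith) hx1]
    field_simp
    ring
  · intro x hx
    obtain ⟨hx1, hx2⟩ := hx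
    have hπ := pi_pos
    rw [robinSol_ind α (-π) π le_rfl (by linarith) le_rfl x, int_robinG,
      int_abs_mid x (-π) π hx1 hx2]
    have hαne : α ≠ 0 := ne_of_gt hα
    have h1π : (1 + α * π) ≠ 0 := by positivity
    unfold cA
    field_simp
    ring
end
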